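/- For the Beta(2−α,α)-coalescent with n leaves and 1 < α < 2, for every k ≥ 0 the conditional expectation of the number of external branches satisfies E[Y_k | X] = X_k·∏_{i=1}^k (1 − 1/X_i), where the conditional expectation is with respect to the σ-field generated by the whole chain (X_k)_{k≥0}. -/

import Mathlib

open MeasureTheory ProbabilityTheory Filter Asymptotics

noncomputable section

/-- The Euler Beta function `B(x,y) = Γ(x)Γ(y)/Γ(x+y)`. -/
def betaFn (x y : ℝ) : ℝ := Real.Gamma x * Real.Gamma y / Real.Gamma (x + y)

/-- The rate `λ_{b,k} = B(k-α, b-k+α)/B(2-α, α)` of a `k`-merger among `b` blocks for the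
Beta`(2-α,α)`-coalescent. -/
def lamRate (α : ℝ) (b k : ℕ) : ℝ := betaFn ((k : ℝ) - α) ((b : ℝ) - (k : ℝ) + α) / betaFn (2 - α) α

/-- The total merger rate `λ_b = ∑_{k=2}^b C(b,k) λ_{b,k}` of the Beta`(2-α,α)`-coalescent
started from `b` blocks. -/
def lamTotal (α : ℝ) (b : ℕ) : ℝ := ∑ k ∈ Finset.Icc 2 b, (b.choose k : ℝ) * lamRate α b k

/-- The one-step transition probabilities of the block-counting chain of the
Beta`(2-α,α)`-coalescent: from `b ≥ 2` blocks, jump to `b - u + 1` (for `2 ≤ u ≤ b`) with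
probability `C(b,u) λ_{b,u} / λ_b`; the states `b ≤ 1` are absorbing. -/
def transP (α : ℝ) (b c : ℕ) : ℝ :=
  if b ≤ 1 then (if c = b then 1 else 0)
  else if 1 ≤ c ∧ c < b then (b.choose (b - c + 1) : ℝ) * lamRate α b (b - c + 1) / lamTotal α b
  else 0

/-- `X` is (a copy of) the block-counting chain of the Beta`(2-α,α)`-coalescent with `n` leaves:
a Markov chain started at `n` with transition matrix `transP α`, extended to stay at `1` forever
after absorption. -/
def IsBlockChain {Ω : Type*} [MeasurableSpace Ω] (α : ℝ) (n : ℕ) (P : Measure Ω)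
    (X : ℕ → Ω → ℕ) : Prop :=
  (∀ ω, X 0 ω = n) ∧ (∀ k, Measurable (X k)) ∧
  ∀ (k : ℕ) (x : ℕ → ℕ) (c : ℕ),
    (P ({ω | ∀ i ≤ k, X i ω = x i} ∩ {ω | X (k+1) ω = c})).toReal
      = (P {ω | ∀ i ≤ k, X i ω = x i}).toReal * transP α (x k) c

/-- The total number of merging events `τ_n`, i.e. the absorption time of the block-counting
chain at state `1`. -/
def tauN {Ω : Type*} (X : ℕ → Ω → ℕ) (ω : Ω) : ℕ := sInf {k | X k ω = 1}

/-- The hypergeometric probability `P(H = h) = C(M,h) C(N-M,u-h) / C(N,u)`. -/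
def hypPMF (N M u h : ℕ) : ℝ :=
  if h ≤ u then ((M.choose h : ℝ) * ((N - M).choose (u - h) : ℝ)) / (N.choose u : ℝ) else 0

/-- One-step conditional law of the number of external branches: given `X_k = N`, `X_{k+1} = N'`
and `Y_k = M`, the value `Y_{k+1} = M'` has probability `P(H = M - M')` where `H` is
hypergeometric with parameters `(N, M, U)`, `U = N - N' + 1`. -/
def hypStep (N N' M M' : ℕ) : ℝ :=
  if M' ≤ M then hypPMF N M (N - N' + 1) (M - M') else 0

/-- `Y` is the process of external-branch counts associated with the block-counting chain `X`
with `n` leaves: `Y_0 = n` and, conditionally on `X` and `Y_0, …, Y_k`, one has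
`Y_{k+1} = Y_k - H_{k+1}` with `H_{k+1}` hypergeometric with parameters
`(X_k, Y_k, X_k - X_{k+1} + 1)`. -/
def IsExternalCount {Ω : Type*} [MeasurableSpace Ω] (n : ℕ) (P : Measure Ω)
    (X Y : ℕ → Ω → ℕ) : Prop :=
  (∀ ω, Y 0 ω = n) ∧ (∀ k, Measurable (Y k)) ∧
  ∀ (m k : ℕ), k < m → ∀ (x y : ℕ → ℕ),
    (P ({ω | ∀ i ≤ m, X i ω = x i} ∩ {ω | ∀ i ≤ k + 1, Y i ω = y i})).toReal
      = (P ({ω | ∀ i ≤ m, X i ω = x i} ∩ {ω | ∀ i ≤ k, Y i ω = y i})).toReal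
        * hypStep (x k) (x (k+1)) (y k) (y (k+1))

/-- `W` is a sequence of i.i.d. standard exponential random variables. -/
def IsStdExpSeq {Ω : Type*} [MeasurableSpace Ω] (P : Measure Ω) (W : ℕ → Ω → ℝ) : Prop :=
  (∀ k, Measurable (W k)) ∧
  iIndepFun (m := fun _ => Real.measurableSpace) W P ∧
  ∀ k, P.map (W k) = expMeasure 1

/-- `ς` has the maximally skewed strictly `α`-stable law used in the paper: mean zero,
`P(ς > x) = o(x^{-α})`, `P(ς < -x) ~ x^{-α}` as `x → ∞`, and for independent copies
`ς₁, ς₂` of `ς` and `a, b > 0`, `a ς₁ + b ς₂ ≝ (a^α + b^α)^{1/α} ς`. -/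
structure IsMaxSkewedStable {Ω' : Type*} [MeasurableSpace Ω'] (α : ℝ) (P' : Measure Ω')
    (ς : Ω' → ℝ) : Prop where
  measurable : Measurable ς
  integrable : Integrable ς P'
  mean_zero : ∫ ω, ς ω ∂P' = 0
  tail_right : (fun x : ℝ => (P' {ω | x < ς ω}).toReal) =o[atTop] fun x : ℝ => x ^ (-α)
  tail_left : (fun x : ℝ => (P' {ω | ς ω < -x}).toReal) ~[atTop] fun x : ℝ => x ^ (-α)
  stable : ∀ (Ω₂ : Type) (_ : MeasurableSpace Ω₂) (P₂ : Measure Ω₂), IsProbabilityMeasure P₂ →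
    ∀ ς₁ ς₂ : Ω₂ → ℝ, Measurable ς₁ → Measurable ς₂ → IndepFun ς₁ ς₂ P₂ →
      P₂.map ς₁ = P'.map ς → P₂.map ς₂ = P'.map ς →
      ∀ a b : ℝ, 0 < a → 0 < b →
        P₂.map (fun ω => a * ς₁ ω + b * ς₂ ω)
          = P'.map (fun ω => (a ^ α + b ^ α) ^ α⁻¹ * ς ω)

/-- Convergence in distribution (weak convergence of the laws, tested against bounded
continuous functions). -/
def TendstoInDist (μ : ℕ → Measure ℝ) (ν : Measure ℝ) : Prop :=
  ∀ f : BoundedContinuousFunction ℝ ℝ,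
    Tendsto (fun n => ∫ x, f x ∂(μ n)) atTop (nhds (∫ x, f x ∂ν))

/-- `Z_n = O_P(a_n)`: for every `δ > 0` there is a constant `C` with
`limsup_n P(|Z_n| > C a_n) ≤ δ`. -/
def IsBigOP {Ω : Type*} [MeasurableSpace Ω] (P : Measure Ω) (Z : ℕ → Ω → ℝ) (a : ℕ → ℝ) : Prop :=
  ∀ δ : ℝ, 0 < δ → ∃ C : ℝ, Filter.limsup (fun n => (P {ω | C * a n < |Z n ω|}).toReal) atTop ≤ δ

/-- The total external branch length `ℓ_n = ∑_{k=0}^{τ_n - 1} Y_k W_k / λ_{X_k}`. -/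
def extLength (α : ℝ) {Ω : Type*} (X Y : ℕ → Ω → ℕ) (W : ℕ → Ω → ℝ) (ω : Ω) : ℝ :=
  ∑ k ∈ Finset.range (tauN X ω), (Y k ω : ℝ) * W k ω / lamTotal α (X k ω)

/-- The total branch length `L_n = ∑_{k=0}^{τ_n - 1} X_k W_k / λ_{X_k}`. -/
def totLength (α : ℝ) {Ω : Type*} (X : ℕ → Ω → ℕ) (W : ℕ → Ω → ℝ) (ω : Ω) : ℝ :=
  ∑ k ∈ Finset.range (tauN X ω), (X k ω : ℝ) * W k ω / lamTotal α (X k ω)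

/-- The product `Π_j^k = ∏_{i=j+1}^k (1 - 1/X_i)`. -/
def PiJK {Ω : Type*} (X : ℕ → Ω → ℕ) (j k : ℕ) (ω : Ω) : ℝ :=
  ∏ i ∈ Finset.Icc (j + 1) k, (1 - 1 / (X i ω : ℝ))

/-!
Fix a path `x` of the block-counting chain. Given `X = x` and `Y_k = M`, the number `H` of external
branches taking part in the `(k+1)`-st merger is hypergeometric with mean `M U / N`, where
`N = x_k` and `U = x_k - x_{k+1} + 1`; hence `E[Y_{k+1} | X, Y_k] = Y_k (x_{k+1} - 1) / x_k`.
Iterating, `∫ Y_k = x_k ∏_{i=1}^k (1 - 1/x_i) · P(X_0 = x_0, …, X_m = x_m)` over every such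
cylinder event with `m ≥ k`. These events form a π-system generating `σ(X)`, and the right-hand
side is `σ(X)`-measurable and bounded by `n`, which characterises the conditional expectation.
-/

section Hypergeometric

open Finset

lemma sum_range_sub_mul_choose_mul_choose {M N : ℕ} (hM : M ≤ N) (u : ℕ) :
    ∑ h ∈ range (u + 1), (M - h) * M.choose h * (N - M).choose (u - h)
      = M * (N - 1).choose u := by
  obtain _ | M := M
  · simp
  have hterm : ∀ h, (M + 1 - h) * (M + 1).choose h = (M + 1) * M.choose h := fun h => by
    rw [mul_comm, ← Nat.choose_mul_succ_eq, mul_comm]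
  simp_rw [hterm, mul_assoc, ← mul_sum]
  rw [← Nat.sum_antidiagonal_eq_sum_range_succ (fun i j => M.choose i * (N - (M + 1)).choose j),
    ← Nat.add_choose_eq]
  congr 2
  omega

lemma choose_pred_mul_eq (N u : ℕ) : (N - 1).choose u * N = N.choose u * (N - u) := by
  obtain _ | N := N
  · simp
  exact Nat.choose_mul_succ_eq N u

lemma sum_range_sub_mul_hypPMF {N M u : ℕ} (hM : M ≤ N) (hu : u ≤ N) :
    ∑ h ∈ range (u + 1), ((M - h : ℕ) : ℝ) * hypPMF N M u h = M * (N - u) / N := by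
  have hchoose : (N.choose u : ℝ) ≠ 0 := by exact_mod_cast (Nat.choose_pos hu).ne'
  have hsum : ∑ h ∈ range (u + 1), ((M - h : ℕ) : ℝ) * hypPMF N M u h
      = (M * (N - 1).choose u : ℕ) / N.choose u := by
    rw [← sum_range_sub_mul_choose_mul_choose hM u, Nat.cast_sum, sum_div]
    refine sum_congr rfl fun h hh => ?_
    rw [hypPMF, if_pos (Nat.lt_succ_iff.mp (mem_range.mp hh))]
    push_cast
    ring
  obtain rfl | hN := N.eq_zero_or_pos
  · simp [Nat.le_zero.mp hM] at hsum ⊢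
  rw [hsum, div_eq_div_iff hchoose (by positivity), ← Nat.cast_sub hu]
  exact_mod_cast (by rw [mul_assoc, choose_pred_mul_eq]; ring :
    M * (N - 1).choose u * N = M * (N - u) * N.choose u)

lemma hypStep_nonneg (N N' M M' : ℕ) : 0 ≤ hypStep N N' M M' := by
  unfold hypStep hypPMF
  split_ifs <;> positivity

lemma hypStep_eq_zero_of_lt {N N' M M' : ℕ} (h : M < M') : hypStep N N' M M' = 0 :=
  if_neg h.not_ge

-- Only `N - M` internal branches are available, and the merged block is internal.
lemma lt_of_hypStep_ne_zero {N N' M M' : ℕ} (h : hypStep N N' M M' ≠ 0) (hM : M ≤ N)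
    (hN' : N' ≤ N) : M' < N' := by
  unfold hypStep hypPMF at h
  split_ifs at h with h₁ h₂
  · have : ¬N - M < N - N' + 1 - (M - M') := fun hlt => h <| by
      rw [Nat.choose_eq_zero_of_lt hlt, Nat.cast_zero, mul_zero, zero_div]
    omega
  all_goals exact absurd rfl h

lemma sum_range_mul_hypStep {N N' M : ℕ} (hM : M ≤ N) (hN' : N' ≤ N)
    (hpos : 0 < N → 0 < N') :
    ∑ c ∈ range (M + 1), (c : ℝ) * hypStep N N' M c = M * (N' - 1) / N := by
  obtain rfl | hN := N.eq_zero_or_pos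
  · simp [Nat.le_zero.mp hM]
  set u := N - N' + 1
  have hu : u ≤ N := by have := hpos hN; omega
  set F : ℕ → ℝ := fun h => ((M - h : ℕ) : ℝ) * hypPMF N M u h
  have hreflect :
      ∑ c ∈ range (M + 1), (c : ℝ) * hypStep N N' M c = ∑ h ∈ range (M + 1), F h := by
    rw [← sum_range_reflect F]
    refine sum_congr rfl fun c hc => ?_
    have hcM := Nat.lt_succ_iff.mp (mem_range.mp hc)
    simp only [F, u, hypStep, if_pos hcM, Nat.add_sub_cancel, Nat.sub_sub_self hcM]
  have hM_N : ∑ h ∈ range (M + 1), F h = ∑ h ∈ range (N + 1), F h :=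
    sum_subset (range_subset_range.2 (by omega)) fun h _ hh => by
      rw [mem_range, not_lt] at hh
      simp [F, Nat.sub_eq_zero_of_le (Nat.le_of_succ_le hh)]
  have hu_N : ∑ h ∈ range (u + 1), F h = ∑ h ∈ range (N + 1), F h :=
    sum_subset (range_subset_range.2 (by omega)) fun h _ hh => by
      rw [mem_range, not_lt] at hh
      simp [F, hypPMF, not_le.mpr (Nat.lt_of_succ_le hh)]
  rw [hreflect, hM_N, ← hu_N, sum_range_sub_mul_hypPMF hM hu]
  congr 2
  have := hpos hN
  push_cast [u, Nat.cast_sub hN']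
  ring

lemma tsum_natCast_mul_hypStep {N N' M : ℕ} (hM : M ≤ N) (hN' : N' ≤ N)
    (hpos : 0 < N → 0 < N') :
    ∑' c : ℕ, (c : ENNReal) * ENNReal.ofReal (hypStep N N' M c)
      = ENNReal.ofReal (M * (N' - 1) / N) := by
  rw [tsum_eq_sum (s := range (M + 1)) fun c hc => by
      rw [hypStep_eq_zero_of_lt (by simpa using hc), ENNReal.ofReal_zero, mul_zero],
    ← sum_range_mul_hypStep hM hN' hpos,
    ENNReal.ofReal_sum_of_nonneg fun c _ => mul_nonneg c.cast_nonneg (hypStep_nonneg _ _ _ _)]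
  refine sum_congr rfl fun c _ => ?_
  rw [ENNReal.ofReal_mul c.cast_nonneg, ENNReal.ofReal_natCast]

end Hypergeometric

lemma le_and_pos_of_transP_ne_zero {α : ℝ} {b c : ℕ} (h : transP α b c ≠ 0) :
    c ≤ b ∧ (0 < b → 0 < c) := by
  unfold transP at h
  split_ifs at h with h₁ h₂ h₃
  · omega
  · exact absurd rfl h
  · omega
  · exact absurd rfl h

def externalMean (x : ℕ → ℕ) (k : ℕ) : ℝ := x k * ∏ i ∈ Finset.Icc 1 k, (1 - 1 / (x i : ℝ))

lemma one_sub_one_div_natCast_mem_Icc (m : ℕ) : 1 - 1 / (m : ℝ) ∈ Set.Icc 0 1 := by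
  rw [one_div]
  exact ⟨sub_nonneg.mpr (Nat.cast_inv_le_one m), sub_le_self _ (by positivity)⟩

lemma externalMean_nonneg (x : ℕ → ℕ) (k : ℕ) : 0 ≤ externalMean x k :=
  mul_nonneg (Nat.cast_nonneg _)
    (Finset.prod_nonneg fun _ _ => (one_sub_one_div_natCast_mem_Icc _).1)

lemma externalMean_le (x : ℕ → ℕ) (k : ℕ) : externalMean x k ≤ x k :=
  mul_le_of_le_one_right (Nat.cast_nonneg _) (Finset.prod_le_one
    (fun _ _ => (one_sub_one_div_natCast_mem_Icc _).1)
    fun _ _ => (one_sub_one_div_natCast_mem_Icc _).2)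

lemma externalMean_congr {x x' : ℕ → ℕ} {k : ℕ} (h : ∀ i ≤ k, x i = x' i) :
    externalMean x k = externalMean x' k := by
  unfold externalMean
  rw [h k le_rfl, Finset.prod_congr rfl fun i hi => by rw [h i (Finset.mem_Icc.mp hi).2]]

lemma externalMean_succ {x : ℕ → ℕ} {k : ℕ} (hle : x (k + 1) ≤ x k)
    (hpos : 0 < x k → 0 < x (k + 1)) :
    externalMean x (k + 1) = externalMean x k * ((x (k + 1) - 1) / x k) := by
  unfold externalMean
  rw [Finset.prod_Icc_succ_top (by omega)]
  obtain h | h := (x k).eq_zero_or_pos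
  · simp [h, Nat.le_zero.mp (h ▸ hle)]
  have hk : (x k : ℝ) ≠ 0 := by positivity
  have hk' : (x (k + 1) : ℝ) ≠ 0 := by have := hpos h; positivity
  field_simp

lemma measurable_externalMean (k : ℕ) : Measurable fun x : ℕ → ℕ => externalMean x k := by
  unfold externalMean
  fun_prop

section Cylinders

open Set

variable {Ω : Type*}

def cylinderSet (Z : ℕ → Ω → ℕ) (m : ℕ) (x : ℕ → ℕ) : Set Ω := {ω | ∀ i ≤ m, Z i ω = x i}

lemma cylinderSet_succ (Z : ℕ → Ω → ℕ) (m : ℕ) (x : ℕ → ℕ) :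
    cylinderSet Z (m + 1) x = cylinderSet Z m x ∩ {ω | Z (m + 1) ω = x (m + 1)} := by
  ext ω
  simp only [cylinderSet, mem_ofPred_eq, mem_inter_iff, Nat.le_succ_iff, or_imp, forall_and,
    forall_eq]

lemma cylinderSet_antitone (Z : ℕ → Ω → ℕ) (x : ℕ → ℕ) {m m' : ℕ} (h : m ≤ m') :
    cylinderSet Z m' x ⊆ cylinderSet Z m x :=
  fun _ hω i hi => hω i (hi.trans h)

lemma cylinderSet_congr (Z : ℕ → Ω → ℕ) {m : ℕ} {x x' : ℕ → ℕ} (h : ∀ i ≤ m, x i = x' i) :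
    cylinderSet Z m x = cylinderSet Z m x' := by
  ext ω
  exact forall₂_congr fun i hi => by rw [h i hi]

-- Paths `v : Fin (m + 1) → ℕ` are padded with zeros to fit the `ℕ → ℕ` form of the hypotheses.
lemma cylinderSet_extend (Z : ℕ → Ω → ℕ) {m : ℕ} (v : Fin (m + 1) → ℕ) :
    cylinderSet Z m (Function.extend Fin.val v 0)
      = (fun ω (i : Fin (m + 1)) => Z i ω) ⁻¹' {v} := by
  ext ω
  simp only [cylinderSet, mem_ofPred_eq, mem_preimage, mem_singleton_iff, funext_iff]
  refine ⟨fun h i => ?_, fun h i hi => ?_⟩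
  · rw [h i (Nat.lt_succ_iff.mp i.2), Fin.val_injective.extend_apply]
  · rw [h ⟨i, Nat.lt_succ_iff.mpr hi⟩, ← Fin.val_injective.extend_apply v 0 ⟨i, _⟩]

lemma extend_val_last {m : ℕ} (v : Fin (m + 1) → ℕ) :
    Function.extend Fin.val v 0 m = v (Fin.last m) :=
  Fin.val_injective.extend_apply v 0 (Fin.last m)

lemma extend_val_snoc_of_le {k : ℕ} (v : Fin (k + 1) → ℕ) (c : ℕ) {i : ℕ} (hi : i ≤ k) :
    Function.extend Fin.val (Fin.snoc v c : Fin (k + 2) → ℕ) 0 i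
      = Function.extend Fin.val v 0 i := by
  have h := Fin.val_injective.extend_apply v 0 ⟨i, Nat.lt_succ_of_le hi⟩
  have h' := Fin.val_injective.extend_apply (Fin.snoc v c : Fin (k + 2) → ℕ) 0
    (Fin.castSucc ⟨i, Nat.lt_succ_of_le hi⟩)
  rw [Fin.snoc_castSucc] at h'
  exact h'.trans h.symm

lemma extend_val_snoc_last {k : ℕ} (v : Fin (k + 1) → ℕ) (c : ℕ) :
    Function.extend Fin.val (Fin.snoc v c : Fin (k + 2) → ℕ) 0 (k + 1) = c :=
  (extend_val_last _).trans (Fin.snoc_last (α := fun _ => ℕ) c v)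

lemma iUnion_cylinderSet_extend (Z : ℕ → Ω → ℕ) (m : ℕ) :
    ⋃ v : Fin (m + 1) → ℕ, cylinderSet Z m (Function.extend Fin.val v 0) = univ := by
  simp_rw [cylinderSet_extend, ← preimage_iUnion, iUnion_of_singleton, preimage_univ]

lemma pairwise_disjoint_cylinderSet_extend (Z : ℕ → Ω → ℕ) (m : ℕ) :
    Pairwise (Function.onFun Disjoint
      fun v : Fin (m + 1) → ℕ => cylinderSet Z m (Function.extend Fin.val v 0)) := by
  simp_rw [cylinderSet_extend]
  exact pairwise_disjoint_fiber _

lemma measurableSet_cylinderSet [MeasurableSpace Ω] {Z : ℕ → Ω → ℕ}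
    (hZ : ∀ i, Measurable (Z i)) (m : ℕ) (x : ℕ → ℕ) : MeasurableSet (cylinderSet Z m x) := by
  simp only [cylinderSet, ofPred_forall]
  exact .iInter fun i => .iInter fun _ => hZ i (measurableSet_singleton _)

end Cylinders

section Decomposition

open Set MeasureTheory

variable {Ω : Type*} [MeasurableSpace Ω] {μ : Measure Ω} {Z : ℕ → Ω → ℕ}

lemma setLIntegral_natCast_eq_tsum (hZ : ∀ i, Measurable (Z i)) (m : ℕ) {s : Set Ω}
    (hs : MeasurableSet s) :
    ∫⁻ ω in s, (Z m ω : ENNReal) ∂μ = ∑' v : Fin (m + 1) → ℕ,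
      (v (Fin.last m) : ENNReal) * μ (s ∩ cylinderSet Z m (Function.extend Fin.val v 0)) := by
  conv_lhs => rw [← inter_univ s, ← iUnion_cylinderSet_extend Z m, inter_iUnion]
  rw [lintegral_iUnion (fun v => hs.inter (measurableSet_cylinderSet hZ m _))
    fun v w hvw => (pairwise_disjoint_cylinderSet_extend Z m hvw).mono inter_subset_right
      inter_subset_right]
  refine tsum_congr fun v => ?_
  rw [← setLIntegral_const]
  refine setLIntegral_congr_fun (hs.inter (measurableSet_cylinderSet hZ m _)) fun ω hω => ?_
  rw [hω.2 m le_rfl, extend_val_last]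

lemma ae_of_forall_cylinderSet (m : ℕ) {p : Ω → Prop}
    (h : ∀ x, μ (cylinderSet Z m x) ≠ 0 → ∀ ω ∈ cylinderSet Z m x, p ω) : ∀ᵐ ω ∂μ, p ω := by
  rw [ae_iff]
  refine measure_mono_null (fun ω hω => ?_) (measure_iUnion_null fun v : Fin (m + 1) → ℕ =>
    show μ (cylinderSet Z m (Function.extend Fin.val v 0) ∩ {ω | ¬p ω}) = 0 from ?_)
  · obtain ⟨v, hv⟩ := mem_iUnion.mp ((iUnion_cylinderSet_extend Z m).symm ▸ mem_univ ω)
    exact mem_iUnion.mpr ⟨v, hv, hω⟩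
  · by_cases hv : μ (cylinderSet Z m (Function.extend Fin.val v 0)) = 0
    · exact measure_mono_null inter_subset_left hv
    · rw [eq_empty_of_forall_notMem fun ω (hω : ω ∈ _ ∩ {ω | ¬p ω}) => hω.2 (h _ hv ω hω.1),
        measure_empty]

end Decomposition

section Generation

open Set MeasurableSpace

variable {Ω : Type*} (Z : ℕ → Ω → ℕ)

lemma cylinderSet_inter_eq {m m' : ℕ} (h : m ≤ m') {x x' : ℕ → ℕ}
    (hne : (cylinderSet Z m x ∩ cylinderSet Z m' x').Nonempty) :
    cylinderSet Z m x ∩ cylinderSet Z m' x' = cylinderSet Z m' x' := by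
  obtain ⟨ω, hω, hω'⟩ := hne
  refine inter_eq_self_of_subset_right fun ω₀ hω₀ i hi => ?_
  rw [hω₀ i (hi.trans h), ← hω' i (hi.trans h), hω i hi]

lemma isPiSystem_cylinderSet (k : ℕ) :
    IsPiSystem {s | ∃ m x, k ≤ m ∧ s = cylinderSet Z m x} := by
  rintro _ ⟨m, x, hm, rfl⟩ _ ⟨m', x', hm', rfl⟩ hne
  rcases le_total m m' with h | h
  · exact ⟨m', x', hm', cylinderSet_inter_eq Z h hne⟩
  · rw [inter_comm] at hne ⊢
    exact ⟨m, x, hm, cylinderSet_inter_eq Z h hne⟩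

lemma comap_eq_generateFrom_cylinderSet (k : ℕ) :
    MeasurableSpace.comap (fun ω i => Z i ω) MeasurableSpace.pi
      = generateFrom {s | ∃ m x, k ≤ m ∧ s = cylinderSet Z m x} := by
  refine le_antisymm ?_ (generateFrom_le ?_)
  · let _ : MeasurableSpace Ω := generateFrom {s | ∃ m x, k ≤ m ∧ s = cylinderSet Z m x}
    refine Measurable.comap_le (measurable_pi_iff.mpr fun i => ?_)
    have hpath : Measurable fun ω (j : Fin (i + k + 1)) => Z j ω :=
      measurable_to_countable' fun v => cylinderSet_extend Z v ▸
        measurableSet_generateFrom ⟨i + k, _, by omega, rfl⟩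
    exact (measurable_pi_apply (⟨i, by omega⟩ : Fin (i + k + 1))).comp hpath
  · rintro _ ⟨m, x, -, rfl⟩
    let _ : MeasurableSpace Ω := MeasurableSpace.comap (fun ω i => Z i ω) MeasurableSpace.pi
    exact measurableSet_cylinderSet
      (fun i => (measurable_pi_apply i).comp (comap_measurable _)) m x

end Generation

section CondExp

open Set MeasureTheory

variable {Ω : Type*} {m m₀ : MeasurableSpace Ω} {μ : Measure Ω}

lemma setLIntegral_eq_of_isPiSystem (hm : m ≤ m₀) {S T : Set (Set Ω)}
    (hS : m = MeasurableSpace.generateFrom S) (hSpi : IsPiSystem S) (hTS : T ⊆ S)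
    (hT : T.Countable) (hTU : ⋃₀ T = univ) {f g : Ω → ENNReal}
    (hfT : ∀ t ∈ T, ∫⁻ ω in t, f ω ∂μ ≠ ⊤)
    (hfg : ∀ s ∈ S, ∫⁻ ω in s, f ω ∂μ = ∫⁻ ω in s, g ω ∂μ) {s : Set Ω}
    (hs : MeasurableSet[m] s) : ∫⁻ ω in s, f ω ∂μ = ∫⁻ ω in s, g ω ∂μ := by
  have hSm : ∀ s ∈ S, MeasurableSet[m] s := fun s hs =>
    hS ▸ MeasurableSpace.measurableSet_generateFrom hs
  have htrim : ∀ (h : Ω → ENNReal) s, MeasurableSet[m] s →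
      (μ.withDensity h).trim hm s = ∫⁻ ω in s, h ω ∂μ := fun h s hs => by
    rw [trim_measurableSet_eq hm hs, withDensity_apply _ (hm s hs)]
  have heq : (μ.withDensity f).trim hm = (μ.withDensity g).trim hm :=
    Measure.ext_of_generateFrom_of_cover_subset hS hSpi hTS hT hTU
      (fun t ht => htrim f t (hSm t (hTS ht)) ▸ hfT t ht)
      fun s hs => by rw [htrim f s (hSm s hs), htrim g s (hSm s hs), hfg s hs]
  rw [← htrim f s hs, ← htrim g s hs, heq]

lemma ae_eq_condExp_of_forall_setLIntegral_eq [IsFiniteMeasure μ] (hm : m ≤ m₀)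
    {f g : Ω → ℝ} (hf : 0 ≤ f) (hg : 0 ≤ g) (hfm : AEStronglyMeasurable[m₀] f μ)
    (hgm : StronglyMeasurable[m] g) (hgi : Integrable g μ)
    (hfg : ∀ s, MeasurableSet[m] s →
      ∫⁻ ω in s, ENNReal.ofReal (f ω) ∂μ = ∫⁻ ω in s, ENNReal.ofReal (g ω) ∂μ) :
    μ[f | m] =ᵐ[μ] g := by
  have hfi : Integrable f μ := by
    refine ⟨hfm, (hasFiniteIntegral_iff_ofReal (.of_forall hf)).mpr ?_⟩
    rw [← setLIntegral_univ, hfg univ MeasurableSet.univ, setLIntegral_univ]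
    exact hgi.lintegral_lt_top
  refine (ae_eq_condExp_of_forall_setIntegral_eq hm hfi (fun s _ _ => hgi.integrableOn)
    (fun s hs _ => ?_) hgm.aestronglyMeasurable).symm
  rw [integral_eq_lintegral_of_nonneg_ae (.of_forall hg)
      (hgm.mono hm).aestronglyMeasurable.restrict,
    integral_eq_lintegral_of_nonneg_ae (.of_forall hf) hfm.restrict, hfg s hs]

end CondExp

section Coalescent

open Set MeasureTheory

variable {Ω : Type*} [MeasurableSpace Ω] {α : ℝ} {n : ℕ} {P : Measure Ω} [IsFiniteMeasure P]
  {X Y : ℕ → Ω → ℕ}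

namespace IsBlockChain

omit [IsFiniteMeasure P] in
lemma head_eq (hX : IsBlockChain α n P X) {m : ℕ} {x : ℕ → ℕ}
    (h : P (cylinderSet X m x) ≠ 0) : x 0 = n := by
  obtain ⟨ω, hω⟩ := nonempty_of_measure_ne_zero h
  rw [← hω 0 m.zero_le, hX.1 ω]

lemma transP_ne_zero (hX : IsBlockChain α n P X) {m j : ℕ} {x : ℕ → ℕ}
    (h : P (cylinderSet X m x) ≠ 0) (hj : j < m) : transP α (x j) (x (j + 1)) ≠ 0 := by
  intro h0
  have hstep : (P (cylinderSet X (j + 1) x)).toReal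
      = (P (cylinderSet X j x)).toReal * transP α (x j) (x (j + 1)) := by
    rw [cylinderSet_succ]
    exact hX.2.2 j x _
  rw [h0, mul_zero, ENNReal.toReal_eq_zero_iff] at hstep
  exact h (measure_mono_null (cylinderSet_antitone X x hj)
    (hstep.resolve_right (measure_ne_top _ _)))

lemma le_of_measure_ne_zero (hX : IsBlockChain α n P X) {m : ℕ} {x : ℕ → ℕ}
    (h : P (cylinderSet X m x) ≠ 0) : ∀ j ≤ m, x j ≤ n
  | 0, _ => (hX.head_eq h).le
  | j + 1, hj => (le_and_pos_of_transP_ne_zero (hX.transP_ne_zero h hj)).1.trans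
      (hX.le_of_measure_ne_zero h j (by omega))

lemma ae_le (hX : IsBlockChain α n P X) (k : ℕ) : ∀ᵐ ω ∂P, X k ω ≤ n :=
  ae_of_forall_cylinderSet (Z := X) k fun _ hx _ hω =>
    hω k le_rfl ▸ hX.le_of_measure_ne_zero hx k le_rfl

end IsBlockChain

namespace IsExternalCount

lemma measure_inter_succ (hY : IsExternalCount n P X Y) {m k : ℕ} (hkm : k < m)
    (x y : ℕ → ℕ) :
    P (cylinderSet X m x ∩ cylinderSet Y (k + 1) y) = P (cylinderSet X m x ∩ cylinderSet Y k y)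
      * ENNReal.ofReal (hypStep (x k) (x (k + 1)) (y k) (y (k + 1))) := by
  rw [← ENNReal.ofReal_toReal (measure_ne_top P (_ ∩ cylinderSet Y (k + 1) y)),
    ← ENNReal.ofReal_toReal (measure_ne_top P (_ ∩ cylinderSet Y k y)),
    ← ENNReal.ofReal_mul ENNReal.toReal_nonneg]
  exact congrArg ENNReal.ofReal (hY.2.2 m k hkm x y)

lemma le_of_measure_ne_zero (hY : IsExternalCount n P X Y) (hX : IsBlockChain α n P X) {m : ℕ}
    {x y : ℕ → ℕ} : ∀ k ≤ m, P (cylinderSet X m x ∩ cylinderSet Y k y) ≠ 0 → y k ≤ x k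
  | 0, _, h => by
    obtain ⟨ω, hωX, hωY⟩ := nonempty_of_measure_ne_zero h
    rw [← hωX 0 (Nat.zero_le m), ← hωY 0 le_rfl, hX.1 ω, hY.1 ω]
  | k + 1, hk, h => by
    have hA : P (cylinderSet X m x) ≠ 0 := fun h0 => h (measure_mono_null inter_subset_left h0)
    have hk' : P (cylinderSet X m x ∩ cylinderSet Y k y) ≠ 0 := fun h0 =>
      h (measure_mono_null (inter_subset_inter_right _ (cylinderSet_antitone Y y k.le_succ)) h0)
    have hstep : hypStep (x k) (x (k + 1)) (y k) (y (k + 1)) ≠ 0 := fun h0 => h <| by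
      rw [hY.measure_inter_succ hk, h0, ENNReal.ofReal_zero, mul_zero]
    exact (lt_of_hypStep_ne_zero hstep (hY.le_of_measure_ne_zero hX k (by omega) hk')
      (le_and_pos_of_transP_ne_zero (hX.transP_ne_zero hA hk)).1).le

lemma setLIntegral_succ (hY : IsExternalCount n P X Y) (hX : IsBlockChain α n P X) {k m : ℕ}
    (hkm : k < m) (x : ℕ → ℕ) :
    ∫⁻ ω in cylinderSet X m x, (Y (k + 1) ω : ENNReal) ∂P
      = ENNReal.ofReal ((x (k + 1) - 1) / x k)
        * ∫⁻ ω in cylinderSet X m x, (Y k ω : ENNReal) ∂P := by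
  set A := cylinderSet X m x
  by_cases hA : P A = 0
  · simp [Measure.restrict_eq_zero.mpr hA]
  obtain ⟨hle, hpos⟩ := le_and_pos_of_transP_ne_zero (hX.transP_ne_zero hA hkm)
  have hA_meas : MeasurableSet A := measurableSet_cylinderSet hX.2.1 m x
  have hlast : ∀ v : Fin (k + 1) → ℕ, ∑' c : ℕ,
      (c : ENNReal) * P (A ∩ cylinderSet Y (k + 1) (Function.extend Fin.val (Fin.snoc v c) 0))
      = ENNReal.ofReal ((x (k + 1) - 1) / x k) * ((v (Fin.last k) : ENNReal)
        * P (A ∩ cylinderSet Y k (Function.extend Fin.val v 0))) := by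
    intro v
    have hstep : ∀ c : ℕ,
        P (A ∩ cylinderSet Y (k + 1) (Function.extend Fin.val (Fin.snoc v c) 0))
          = P (A ∩ cylinderSet Y k (Function.extend Fin.val v 0))
            * ENNReal.ofReal (hypStep (x k) (x (k + 1)) (v (Fin.last k)) c) := fun c => by
      rw [hY.measure_inter_succ hkm, cylinderSet_congr Y fun i hi => extend_val_snoc_of_le v c hi,
        extend_val_snoc_of_le v c le_rfl, extend_val_last, extend_val_snoc_last]
    simp_rw [hstep, mul_left_comm _ (P _), ENNReal.tsum_mul_left]
    by_cases hB : P (A ∩ cylinderSet Y k (Function.extend Fin.val v 0)) = 0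
    · simp [hB]
    have hM : v (Fin.last k) ≤ x k :=
      extend_val_last v ▸ hY.le_of_measure_ne_zero hX k hkm.le hB
    rw [tsum_natCast_mul_hypStep hM hle hpos, mul_div_assoc,
      ENNReal.ofReal_mul (Nat.cast_nonneg _), ENNReal.ofReal_natCast]
    ring
  calc ∫⁻ ω in A, (Y (k + 1) ω : ENNReal) ∂P
      = ∑' w : Fin (k + 2) → ℕ, (w (Fin.last (k + 1)) : ENNReal)
          * P (A ∩ cylinderSet Y (k + 1) (Function.extend Fin.val w 0)) :=
        setLIntegral_natCast_eq_tsum hY.2.1 (k + 1) hA_meas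
    _ = ∑' p : ℕ × (Fin (k + 1) → ℕ), (p.1 : ENNReal)
          * P (A ∩ cylinderSet Y (k + 1) (Function.extend Fin.val (Fin.snoc p.2 p.1) 0)) := by
        rw [← (Fin.snocEquiv fun _ => ℕ).tsum_eq]
        simp [Fin.snocEquiv]
    _ = ∑' v : Fin (k + 1) → ℕ, ENNReal.ofReal ((x (k + 1) - 1) / x k) * ((v (Fin.last k) : ENNReal)
          * P (A ∩ cylinderSet Y k (Function.extend Fin.val v 0))) := by
        rw [ENNReal.tsum_prod', ENNReal.tsum_comm]
        exact tsum_congr hlast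
    _ = _ := by rw [ENNReal.tsum_mul_left, setLIntegral_natCast_eq_tsum hY.2.1 k hA_meas]

lemma setLIntegral_cylinderSet (hY : IsExternalCount n P X Y) (hX : IsBlockChain α n P X) :
    ∀ {k m : ℕ}, k ≤ m → ∀ x : ℕ → ℕ, ∫⁻ ω in cylinderSet X m x, (Y k ω : ENNReal) ∂P
      = ENNReal.ofReal (externalMean x k) * P (cylinderSet X m x)
  | 0, m, _, x => by
    by_cases hA : P (cylinderSet X m x) = 0
    · simp [Measure.restrict_eq_zero.mpr hA, hA]
    simp [hY.1, externalMean, hX.head_eq hA]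
  | k + 1, m, hkm, x => by
    by_cases hA : P (cylinderSet X m x) = 0
    · simp [Measure.restrict_eq_zero.mpr hA, hA]
    obtain ⟨hle, hpos⟩ := le_and_pos_of_transP_ne_zero (hX.transP_ne_zero hA hkm)
    rw [hY.setLIntegral_succ hX hkm, hY.setLIntegral_cylinderSet hX (by omega),
      externalMean_succ hle hpos, ENNReal.ofReal_mul (externalMean_nonneg x k)]
    ring

lemma setLIntegral_eq_of_measurableSet_comap (hY : IsExternalCount n P X Y)
    (hX : IsBlockChain α n P X) (k : ℕ) {s : Set Ω}
    (hs : MeasurableSet[MeasurableSpace.comap (fun ω i => X i ω) MeasurableSpace.pi] s) :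
    ∫⁻ ω in s, ENNReal.ofReal (Y k ω) ∂P
      = ∫⁻ ω in s, ENNReal.ofReal (externalMean (fun i => X i ω) k) ∂P := by
  simp_rw [ENNReal.ofReal_natCast]
  refine setLIntegral_eq_of_isPiSystem (measurable_pi_iff.mpr hX.2.1).comap_le
    (comap_eq_generateFrom_cylinderSet X k) (isPiSystem_cylinderSet X k)
    (T := range fun v : Fin (k + 1) → ℕ => cylinderSet X k (Function.extend Fin.val v 0))
    (by rintro _ ⟨v, rfl⟩; exact ⟨k, _, le_rfl, rfl⟩) (countable_range _)
    (by rw [sUnion_range, iUnion_cylinderSet_extend]) ?_ ?_ hs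
  · rintro _ ⟨v, rfl⟩
    rw [hY.setLIntegral_cylinderSet hX le_rfl]
    exact ENNReal.mul_ne_top ENNReal.ofReal_ne_top (measure_ne_top P _)
  · rintro _ ⟨m, x, hkm, rfl⟩
    rw [hY.setLIntegral_cylinderSet hX hkm, ← setLIntegral_const]
    refine setLIntegral_congr_fun (measurableSet_cylinderSet hX.2.1 m x) fun ω hω => ?_
    rw [externalMean_congr fun i hi => hω i (hi.trans hkm)]

end IsExternalCount

end Coalescent

theorem conditional_expectation_external_count_general
    (α : ℝ) (n : ℕ)
    (Ω : Type) [inst : MeasurableSpace Ω] (P : Measure Ω) [IsProbabilityMeasure P]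
    (X Y : ℕ → Ω → ℕ)
    (hX : IsBlockChain α n P X)
    (hY : IsExternalCount n P X Y) :
    ∀ k : ℕ,
      P[(fun ω => (Y k ω : ℝ)) |
          MeasurableSpace.comap (fun ω (i : ℕ) => X i ω) MeasurableSpace.pi]
        =ᵐ[P] fun ω => (X k ω : ℝ) * ∏ i ∈ Finset.Icc 1 k, (1 - 1 / (X i ω : ℝ)) := by
  intro k
  have hmean : StronglyMeasurable[MeasurableSpace.comap (fun ω (i : ℕ) => X i ω)
      MeasurableSpace.pi] fun ω => externalMean (fun i => X i ω) k :=
    ((measurable_externalMean k).comp (comap_measurable _)).stronglyMeasurable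
  have hbound : ∀ᵐ ω ∂P, ‖externalMean (fun i => X i ω) k‖ ≤ n := by
    filter_upwards [hX.ae_le k] with ω hω
    rw [Real.norm_of_nonneg (externalMean_nonneg _ k)]
    exact (externalMean_le _ k).trans (Nat.cast_le.mpr hω)
  exact ae_eq_condExp_of_forall_setLIntegral_eq (measurable_pi_iff.mpr hX.2.1).comap_le
    (fun ω => Nat.cast_nonneg _) (fun ω => externalMean_nonneg (fun i => X i ω) k)
    (measurable_from_top.comp (hY.2.1 k)).aestronglyMeasurable hmean
    (.of_bound (hmean.mono (measurable_pi_iff.mpr hX.2.1).comap_le).aestronglyMeasurable n hbound)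
    fun s hs => hY.setLIntegral_eq_of_measurableSet_comap hX k hs

/-- Equation (12): `E[Y_k | X] = X_k ∏_{i=1}^k (1 - 1/X_i)`, where the conditioning is on the
σ-field generated by the whole block-counting chain `X`. -/
theorem conditional_expectation_external_count
    (α : ℝ) (hα₁ : 1 < α) (hα₂ : α < 2) (n : ℕ)
    (Ω : Type) [inst : MeasurableSpace Ω] (P : Measure Ω) [IsProbabilityMeasure P]
    (X Y : ℕ → Ω → ℕ)
    (hX : IsBlockChain α n P X)
    (hY : IsExternalCount n P X Y) :
    ∀ k : ℕ,
      P[(fun ω => (Y k ω : ℝ)) |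
          MeasurableSpace.comap (fun ω (i : ℕ) => X i ω) MeasurableSpace.pi]
        =ᵐ[P] fun ω => (X k ω : ℝ) * ∏ i ∈ Finset.Icc 1 k, (1 - 1 / (X i ω : ℝ)) :=
  conditional_expectation_external_count_general α n Ω (inst := inst) P X Y hX hY

end
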